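/- Let V₁, V₂ be real Hilbert spaces, ℓ₁ : V₁ → W and ℓ₂ : V₂ → W bounded linear operators into a Hilbert space W, and α₁, α₂ > 0. Define M : V₁ × V₂ → V₁ × V₂ by M(v₁, v₂) = (α₁ ℓ₁*(ℓ₁ v₁ + ℓ₂ v₂) + β₁ v₁, α₂ ℓ₂*(ℓ₁ v₁ + ℓ₂ v₂) + β₂ v₂). Then there exists β₀ > 0 (depending on α₁, α₂, ‖ℓ₁‖, ‖ℓ₂‖) such that whenever β₁, β₂ ≥ β₀, the bilinear form a((v₁,v₂),(w₁,w₂)) = ⟨M(v₁,v₂),(w₁,w₂)⟩ is coercive on V₁ × V₂. -/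
import Mathlib


open scoped RealInnerProductSpace

theorem nash_bilinear_form_coercive_for_large_beta
    {V₁ V₂ W : Type*} [NormedAddCommGroup V₁] [InnerProductSpace ℝ V₁] [CompleteSpace V₁]
    [NormedAddCommGroup V₂] [InnerProductSpace ℝ V₂] [CompleteSpace V₂]
    [NormedAddCommGroup W] [InnerProductSpace ℝ W] [CompleteSpace W]
    (ℓ₁ : V₁ →L[ℝ] W) (ℓ₂ : V₂ →L[ℝ] W) (α₁ α₂ : ℝ) (hα₁ : 0 < α₁) (hα₂ : 0 < α₂) :
    ∃ β₀ > 0, ∀ β₁ β₂ : ℝ, β₀ ≤ β₁ → β₀ ≤ β₂ →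
      ∃ c > 0, ∀ (v₁ : V₁) (v₂ : V₂),
        c * (‖v₁‖ ^ 2 + ‖v₂‖ ^ 2) ≤
          ⟪α₁ • (ContinuousLinearMap.adjoint ℓ₁) (ℓ₁ v₁ + ℓ₂ v₂) + β₁ • v₁, v₁⟫ +
            ⟪α₂ • (ContinuousLinearMap.adjoint ℓ₂) (ℓ₁ v₁ + ℓ₂ v₂) + β₂ • v₂, v₂⟫ := by
  set K := (α₁ + α₂) * (‖ℓ₁‖ * ‖ℓ₂‖) with hK
  have hK0 : 0 ≤ K := by positivity
  refine ⟨K + 1, by positivity, ?_⟩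
  intro β₁ β₂ hβ₁ hβ₂
  refine ⟨1, one_pos, ?_⟩
  intro v₁ v₂
  have h1 : ⟪α₁ • (ContinuousLinearMap.adjoint ℓ₁) (ℓ₁ v₁ + ℓ₂ v₂) + β₁ • v₁, v₁⟫
      = α₁ * (‖ℓ₁ v₁‖ ^ 2 + ⟪ℓ₂ v₂, ℓ₁ v₁⟫) + β₁ * ‖v₁‖ ^ 2 := by
    rw [inner_add_left, real_inner_smul_left, real_inner_smul_left,
      ContinuousLinearMap.adjoint_inner_left, inner_add_left,
      real_inner_self_eq_norm_sq, real_inner_self_eq_norm_sq]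
  have h2 : ⟪α₂ • (ContinuousLinearMap.adjoint ℓ₂) (ℓ₁ v₁ + ℓ₂ v₂) + β₂ • v₂, v₂⟫
      = α₂ * (⟪ℓ₁ v₁, ℓ₂ v₂⟫ + ‖ℓ₂ v₂‖ ^ 2) + β₂ * ‖v₂‖ ^ 2 := by
    rw [inner_add_left, real_inner_smul_left, real_inner_smul_left,
      ContinuousLinearMap.adjoint_inner_left, inner_add_left,
      real_inner_self_eq_norm_sq, real_inner_self_eq_norm_sq]
  rw [h1, h2, real_inner_comm (ℓ₁ v₁) (ℓ₂ v₂)]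
  have hcross : |⟪ℓ₁ v₁, ℓ₂ v₂⟫| ≤ ‖ℓ₁‖ * ‖v₁‖ * (‖ℓ₂‖ * ‖v₂‖) :=
    (abs_real_inner_le_norm _ _).trans
      (mul_le_mul (ℓ₁.le_opNorm v₁) (ℓ₂.le_opNorm v₂) (norm_nonneg _) (by positivity))
  have habs := abs_le.mp hcross
  have hsq : ‖v₁‖ * ‖v₂‖ ≤ (‖v₁‖ ^ 2 + ‖v₂‖ ^ 2) / 2 := by nlinarith [sq_nonneg (‖v₁‖ - ‖v₂‖)]
  nlinarith [sq_nonneg ‖ℓ₁ v₁‖, sq_nonneg ‖ℓ₂ v₂‖, sq_nonneg ‖v₁‖, sq_nonneg ‖v₂‖,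
    norm_nonneg ℓ₁, norm_nonneg ℓ₂, norm_nonneg v₁, norm_nonneg v₂,
    mul_le_mul_of_nonneg_left habs.1 (le_of_lt hα₁),
    mul_le_mul_of_nonneg_left habs.1 (le_of_lt hα₂),
    mul_le_mul_of_nonneg_left hsq (mul_nonneg (mul_nonneg (add_pos hα₁ hα₂).le (norm_nonneg ℓ₁)) (norm_nonneg ℓ₂)),
    mul_le_mul_of_nonneg_right hβ₁ (sq_nonneg ‖v₁‖),
    mul_le_mul_of_nonneg_right hβ₂ (sq_nonneg ‖v₂‖)]
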